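/- In the real hyperbolic plane (upper half-plane model), let H be the horoball with point at infinity 0 and Euclidean diameter 1, let μ ≥ log 2, and let γ, γ' be geodesic lines starting from ∞, both meeting the shrunk horoball H[μ], parametrized so that points at equal parameters are equidistant to ∞ and γ enters H at time 0. Then for every s ≥ 0, d(γ(-s), γ'(-s)) ≤ ν(μ)·e^{-s}, where ν(μ) = 2e^{-μ}/(1 + √(1 - e^{-2μ})). -/

import Mathlib

open Filter Set

/-- `γ` is an isometric (unit-speed geodesic) map on the parameter set `D`. -/
def IsGeodOn {X : Type*} [MetricSpace X] (γ : ℝ → X) (D : Set ℝ) : Prop :=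
  ∀ s ∈ D, ∀ t ∈ D, dist (γ s) (γ t) = |s - t|

/-- Membership in the shrunk horoball `H[μ]` of the horoball `H` of the upper half-plane
with point at infinity `0` and Euclidean diameter `1`: `H[μ]` is the tangent disk at `0`
of Euclidean diameter `e^{-μ}`, i.e. `|z|² ≤ e^{-μ} Im z`. -/
def InHoroballAtZero (μ : ℝ) (z : UpperHalfPlane) : Prop :=
  ‖(z : ℂ)‖ ^ 2 ≤ Real.exp (-μ) * z.im

section AuxStmt14
open Real

lemma mink_collinear (a1 a2 a3 b1 b2 b3 c1 c2 c3 d1 d2 : ℝ)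
    (hA : a1^2 + a2^2 - a3^2 = -1)
    (hB : b1^2 + b2^2 - b3^2 = -1)
    (hC : c1^2 + c2^2 - c3^2 = -1)
    (hAC : a1*c1 + a2*c2 - a3*c3 = -Real.cosh d1)
    (hCB : c1*b1 + c2*b2 - c3*b3 = -Real.cosh d2)
    (hAB : a1*b1 + a2*b2 - a3*b3 = -Real.cosh (d1+d2)) :
    Real.sinh (d1+d2) * c1 = Real.sinh d2 * a1 + Real.sinh d1 * b1 ∧
    Real.sinh (d1+d2) * c2 = Real.sinh d2 * a2 + Real.sinh d1 * b2 ∧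
    Real.sinh (d1+d2) * c3 = Real.sinh d2 * a3 + Real.sinh d1 * b3 := by
  have hs : Real.sinh (d1+d2) = Real.sinh d1 * Real.cosh d2 + Real.cosh d1 * Real.sinh d2 :=
    Real.sinh_add d1 d2
  have hcadd : Real.cosh (d1+d2) = Real.cosh d1 * Real.cosh d2 + Real.sinh d1 * Real.sinh d2 :=
    Real.cosh_add d1 d2
  have hc1 : Real.cosh d1 ^ 2 - Real.sinh d1 ^ 2 = 1 := Real.cosh_sq_sub_sinh_sq d1
  have hc2 : Real.cosh d2 ^ 2 - Real.sinh d2 ^ 2 = 1 := Real.cosh_sq_sub_sinh_sq d2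
  set s1 := Real.sinh d1
  set s2 := Real.sinh d2
  set s12 := Real.sinh (d1+d2)
  set v1 := s12 * c1 - s2 * a1 - s1 * b1 with hv1
  set v2 := s12 * c2 - s2 * a2 - s1 * b2 with hv2
  set v3 := s12 * c3 - s2 * a3 - s1 * b3 with hv3
  have hVC : v1*c1 + v2*c2 - v3*c3 = 0 := by
    simp only [hv1, hv2, hv3]
    linear_combination s12 * hC - s2 * hAC - s1 * hCB - hs
  have hVV : v1^2 + v2^2 - v3^2 = 0 := by
    simp only [hv1, hv2, hv3]
    linear_combination s12^2 * hC + s2^2 * hA + s1^2 * hB - (2*s12*s2) * hAC -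
      (2*s12*s1) * hCB + (2*s1*s2) * hAB + (s1^2) * hc2 + (s2^2) * hc1 +
      (- s12 - (s1*Real.cosh d2 + Real.cosh d1 * s2) + 2*(s2*Real.cosh d1 + s1*Real.cosh d2)) * hs
      - (2*s1*s2) * hcadd
  have hsq : (v1*c1 + v2*c2)^2 = (v3*c3)^2 := by
    have h : v1*c1 + v2*c2 = v3*c3 := by linarith
    rw [h]
  have key : v3^2 + (v1*c2 - v2*c1)^2 = 0 := by
    linear_combination (c1^2+c2^2) * hVV + v3^2 * hC - hsq
  have h3sq : v3^2 = 0 := by linarith [key, sq_nonneg v3, sq_nonneg (v1*c2 - v2*c1)]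
  have h3 : v3 = 0 := pow_eq_zero_iff two_ne_zero |>.mp h3sq
  have h1sq : v1^2 = 0 := by linarith [hVV, h3sq, sq_nonneg v1, sq_nonneg v2]
  have h2sq : v2^2 = 0 := by linarith [hVV, h3sq, sq_nonneg v1, sq_nonneg v2]
  have h1 : v1 = 0 := pow_eq_zero_iff two_ne_zero |>.mp h1sq
  have h2 : v2 = 0 := pow_eq_zero_iff two_ne_zero |>.mp h2sq
  refine ⟨by linarith [hv1 ▸ h1], by linarith [hv2 ▸ h2], by linarith [hv3 ▸ h3]⟩

open UpperHalfPlane in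
noncomputable def Xc (z : UpperHalfPlane) : ℝ × ℝ × ℝ :=
  (z.re / z.im, (z.re^2 + z.im^2 - 1) / (2 * z.im), (z.re^2 + z.im^2 + 1) / (2 * z.im))

open UpperHalfPlane in
lemma Xc_prod (z w : UpperHalfPlane) :
    (Xc z).1 * (Xc w).1 + (Xc z).2.1 * (Xc w).2.1 - (Xc z).2.2 * (Xc w).2.2
      = -Real.cosh (dist z w) := by
  have hz := z.im_pos
  have hw := w.im_pos
  have h := UpperHalfPlane.cosh_dist z w
  have hd : dist (z : ℂ) (w : ℂ) ^ 2 = (z.re - w.re)^2 + (z.im - w.im)^2 := by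
    rw [Complex.dist_eq_re_im]
    rw [Real.sq_sqrt (by positivity)]
    simp [UpperHalfPlane.coe_re, UpperHalfPlane.coe_im]
  rw [hd] at h
  simp only [Xc]
  rw [h]
  field_simp
  ring

lemma Xc_norm (z : UpperHalfPlane) :
    (Xc z).1^2 + (Xc z).2.1^2 - (Xc z).2.2^2 = -1 := by
  have := Xc_prod z z
  simpa [dist_self, sq] using this

lemma geod_E1 (γ : ℝ → UpperHalfPlane) (hγ : IsGeodOn γ Set.univ)
    {r s t : ℝ} (hrs : r < s) (hst : s < t) :
    Real.sinh (t - r) * (1 / (γ s).im) =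
      Real.sinh (t - s) * (1 / (γ r).im) + Real.sinh (s - r) * (1 / (γ t).im) := by
  have drs : dist (γ r) (γ s) = s - r := by
    rw [hγ r trivial s trivial, abs_sub_comm, abs_of_pos (by linarith)]
  have dst : dist (γ s) (γ t) = t - s := by
    rw [hγ s trivial t trivial, abs_sub_comm, abs_of_pos (by linarith)]
  have drt : dist (γ r) (γ t) = t - r := by
    rw [hγ r trivial t trivial, abs_sub_comm, abs_of_pos (by linarith)]
  obtain ⟨h1, h2, h3⟩ := mink_collinear (Xc (γ r)).1 (Xc (γ r)).2.1 (Xc (γ r)).2.2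
    (Xc (γ t)).1 (Xc (γ t)).2.1 (Xc (γ t)).2.2
    (Xc (γ s)).1 (Xc (γ s)).2.1 (Xc (γ s)).2.2 (s - r) (t - s)
    (Xc_norm _) (Xc_norm _) (Xc_norm _)
    (by rw [← drs]; have := Xc_prod (γ r) (γ s); linarith [this])
    (by rw [← dst]; have := Xc_prod (γ s) (γ t); linarith [this])
    (by rw [show s - r + (t - s) = t - r by ring, ← drt];
        have := Xc_prod (γ r) (γ t); linarith [this])
  have e2 := h2
  have e3 := h3
  have hcomb : Real.sinh (s - r + (t - s)) * ((Xc (γ s)).2.2 - (Xc (γ s)).2.1) =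
      Real.sinh (t - s) * ((Xc (γ r)).2.2 - (Xc (γ r)).2.1) +
      Real.sinh (s - r) * ((Xc (γ t)).2.2 - (Xc (γ t)).2.1) := by
    linarith [e2, e3]
  have hXq : ∀ u : ℝ, (Xc (γ u)).2.2 - (Xc (γ u)).2.1 = 1 / (γ u).im := by
    intro u
    have := (γ u).im_pos
    simp only [Xc]
    rw [div_sub_div_same, div_eq_div_iff (by positivity) (by positivity)]
    ring
  rw [hXq, hXq, hXq, show s - r + (t - s) = t - r by ring] at hcomb
  exact hcomb

lemma ratio_sinh_tendsto (s t : ℝ) :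
    Filter.Tendsto (fun r => Real.sinh (s - r) / Real.sinh (t - r)) Filter.atBot
      (nhds (Real.exp (s - t))) := by
  have h : ∀ u r : ℝ, Real.sinh (u - r) = Real.exp (-r) * (Real.exp u - Real.exp (2*r - u)) / 2 := by
    intro u r
    rw [Real.sinh_eq, show -(u - r) = (2*r - u) + -r by ring, show u - r = u + -r by ring,
      Real.exp_add, Real.exp_add]
    ring
  have heq : ∀ r : ℝ, Real.sinh (s - r) / Real.sinh (t - r) =
      (Real.exp s - Real.exp (2*r - s)) / (Real.exp t - Real.exp (2*r - t)) := by
    intro r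
    rw [h s r, h t r]
    rcases eq_or_ne (Real.exp t - Real.exp (2*r - t)) 0 with h0 | h0
    · simp [h0]
    · field_simp
  have h2r : ∀ u : ℝ, Filter.Tendsto (fun r : ℝ => Real.exp (2*r - u)) Filter.atBot (nhds 0) := by
    intro u
    apply Real.tendsto_exp_atBot.comp
    apply Filter.tendsto_atBot_add_const_right
    exact (Filter.tendsto_id (α := ℝ)).const_mul_atBot two_pos
  have hlim : Filter.Tendsto
      (fun r => (Real.exp s - Real.exp (2*r - s)) / (Real.exp t - Real.exp (2*r - t)))
      Filter.atBot (nhds ((Real.exp s - 0) / (Real.exp t - 0))) :=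
    (tendsto_const_nhds.sub (h2r s)).div (tendsto_const_nhds.sub (h2r t))
      (by simpa using (Real.exp_pos t).ne')
  have : (Real.exp s - 0) / (Real.exp t - 0) = Real.exp (s - t) := by
    rw [sub_zero, sub_zero, Real.exp_sub]
  rw [this] at hlim
  exact hlim.congr (fun r => (heq r).symm)

lemma geod_y_exp (γ : ℝ → UpperHalfPlane) (hγ : IsGeodOn γ Set.univ)
    (hstart : Filter.Tendsto (fun t => (γ t).im) Filter.atBot Filter.atTop)
    {s t : ℝ} (hst : s < t) : (γ s).im = Real.exp (t - s) * (γ t).im := by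
  have hyinv : Filter.Tendsto (fun r => 1 / (γ r).im) Filter.atBot (nhds 0) := by
    simp only [one_div]; exact hstart.inv_tendsto_atTop
  have hsub : Filter.Tendsto (fun r : ℝ => t - r) Filter.atBot Filter.atTop := by
    simp only [sub_eq_add_neg]
    exact Filter.tendsto_atTop_add_const_left _ t Filter.tendsto_neg_atBot_atTop
  have hsinh_top : Filter.Tendsto (fun r : ℝ => Real.sinh (t - r)) Filter.atBot Filter.atTop := by
    apply Filter.tendsto_atTop_mono' _ _ hsub
    filter_upwards [Filter.eventually_le_atBot t] with r hr
    exact Real.self_le_sinh_iff.mpr (by linarith)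
  have hsinh_inv : Filter.Tendsto (fun r => 1 / Real.sinh (t - r)) Filter.atBot (nhds 0) := by
    simp only [one_div]
    exact hsinh_top.inv_tendsto_atTop
  set F : ℝ → ℝ := fun r => Real.sinh (t - s) * (1/(γ r).im) * (1/Real.sinh (t - r)) +
    (Real.sinh (s - r)/Real.sinh (t - r)) * (1/(γ t).im) with hF
  have hFconst : ∀ᶠ r in Filter.atBot, F r = 1/(γ s).im := by
    filter_upwards [Filter.eventually_lt_atBot s] with r hrs
    have hpos : 0 < Real.sinh (t - r) := Real.sinh_pos_iff.mpr (by linarith)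
    have E1 := geod_E1 γ hγ hrs hst
    calc F r = (Real.sinh (t-s) * (1/(γ r).im) + Real.sinh (s-r) * (1/(γ t).im))
        / Real.sinh (t-r) := by simp only [hF]; ring
      _ = (Real.sinh (t-r) * (1/(γ s).im)) / Real.sinh (t-r) := by rw [E1]
      _ = 1/(γ s).im := mul_div_cancel_left₀ _ hpos.ne'
  have T1 : Filter.Tendsto (fun r => Real.sinh (t-s) * (1/(γ r).im) * (1/Real.sinh (t - r)))
      Filter.atBot (nhds 0) := by
    simpa using (tendsto_const_nhds (x := Real.sinh (t-s)) (f := Filter.atBot)).mul hyinv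
      |>.mul hsinh_inv
  have T2 : Filter.Tendsto (fun r => (Real.sinh (s - r)/Real.sinh (t - r)) * (1/(γ t).im))
      Filter.atBot (nhds (Real.exp (s-t) * (1/(γ t).im))) :=
    (ratio_sinh_tendsto s t).mul tendsto_const_nhds
  have hFlim : Filter.Tendsto F Filter.atBot (nhds (0 + Real.exp (s-t) * (1/(γ t).im))) :=
    T1.add T2
  have hkey : 0 + Real.exp (s-t) * (1/(γ t).im) = 1/(γ s).im :=
    tendsto_nhds_unique (Filter.Tendsto.congr' hFconst hFlim) tendsto_const_nhds
  rw [zero_add] at hkey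
  have hsp := (γ s).im_pos
  have htp := (γ t).im_pos
  have hee : Real.exp (s-t) * Real.exp (t-s) = 1 := by rw [← Real.exp_add]; simp
  field_simp at hkey
  linear_combination Real.exp (t-s) * hkey - (γ s).im * hee

lemma dist_coe_sq (z w : UpperHalfPlane) :
    dist (z : ℂ) (w : ℂ) ^ 2 = (z.re - w.re)^2 + (z.im - w.im)^2 := by
  rw [Complex.dist_eq_re_im, Real.sq_sqrt (by positivity)]
  simp [UpperHalfPlane.coe_re, UpperHalfPlane.coe_im]

lemma geod_re_const (γ : ℝ → UpperHalfPlane) (hγ : IsGeodOn γ Set.univ)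
    (hstart : Filter.Tendsto (fun t => (γ t).im) Filter.atBot Filter.atTop)
    {s t : ℝ} (hst : s < t) : (γ s).re = (γ t).re := by
  have hy := geod_y_exp γ hγ hstart hst
  have hdist : dist (γ s) (γ t) = t - s := by
    rw [hγ s trivial t trivial, abs_sub_comm, abs_of_pos (by linarith)]
  have h := UpperHalfPlane.cosh_dist (γ s) (γ t)
  rw [hdist, Real.cosh_eq, dist_coe_sq, hy, neg_sub] at h
  set E := Real.exp (t - s) with hE
  set y := (γ t).im with hYY
  have hEi : E * Real.exp (s - t) = 1 := by rw [hE, ← Real.exp_add]; simp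
  have hyp : 0 < y := (γ t).im_pos
  have hEp : 0 < E := Real.exp_pos _
  have hA2 : ((γ s).re - (γ t).re)^2 = 0 := by
    have hEiy : E * Real.exp (s - t) * y^2 = y^2 := by linear_combination y^2 * hEi
    field_simp at h
    linear_combination (-1 : ℝ) * h + hEiy
  have := pow_eq_zero_iff two_ne_zero |>.mp hA2
  linarith [this]

lemma abs_sq_eq (z : UpperHalfPlane) : ‖(z:ℂ)‖^2 = z.re^2 + z.im^2 := by
  rw [Complex.sq_norm, Complex.normSq_apply]
  simp [UpperHalfPlane.coe_re, UpperHalfPlane.coe_im]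
  ring

lemma geod_im_exp (γ : ℝ → UpperHalfPlane) (hγ : IsGeodOn γ Set.univ)
    (hstart : Filter.Tendsto (fun t => (γ t).im) Filter.atBot Filter.atTop) (t : ℝ) :
    (γ t).im = Real.exp (-t) * (γ 0).im := by
  rcases lt_trichotomy t 0 with ht | ht | ht
  · have := geod_y_exp γ hγ hstart ht
    rwa [zero_sub] at this
  · simp [ht]
  · have h := geod_y_exp γ hγ hstart ht
    rw [sub_zero] at h
    rw [h, ← mul_assoc, ← Real.exp_add]
    simp

lemma geod_re_const' (γ : ℝ → UpperHalfPlane) (hγ : IsGeodOn γ Set.univ)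
    (hstart : Filter.Tendsto (fun t => (γ t).im) Filter.atBot Filter.atTop) (t : ℝ) :
    (γ t).re = (γ 0).re := by
  rcases lt_trichotomy t 0 with ht | ht | ht
  · exact geod_re_const γ hγ hstart ht
  · rw [ht]
  · exact (geod_re_const γ hγ hstart ht).symm

end AuxStmt14

/-- Lemma 4.2 (2) for ℍ²: let `H` be the horoball with point at infinity `0` and
Euclidean diameter `1`, let `μ ≥ log 2`, and let `γ, γ'` be geodesic lines starting
from `∞` (i.e. with `Im → ∞` at `-∞`), both meeting `H[μ]`, parametrized so that
`γ t, γ' t` are equidistant to `∞` (same imaginary part) and `γ` enters `H` at time `0`.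
Then for every `s ≥ 0`, `d(γ(-s), γ'(-s)) ≤ ν(μ) e^{-s}`, with
`ν(μ) = 2 e^{-μ}/(1 + √(1 - e^{-2μ}))`. -/
theorem stmt_14 (μ : ℝ) (hμ : μ ≥ Real.log 2)
    (γ γ' : ℝ → UpperHalfPlane)
    (hγ : IsGeodOn γ Set.univ) (hγ' : IsGeodOn γ' Set.univ)
    (hstartγ : Filter.Tendsto (fun t => (γ t).im) Filter.atBot Filter.atTop)
    (hstartγ' : Filter.Tendsto (fun t => (γ' t).im) Filter.atBot Filter.atTop)
    (hequi : ∀ t : ℝ, (γ t).im = (γ' t).im)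
    (hmeet : ∃ t : ℝ, InHoroballAtZero μ (γ t))
    (hmeet' : ∃ t : ℝ, InHoroballAtZero μ (γ' t))
    (hentry : InHoroballAtZero 0 (γ 0) ∧ ∀ t < (0:ℝ), ¬ InHoroballAtZero 0 (γ t)) :
    ∀ s : ℝ, 0 ≤ s →
      dist (γ (-s)) (γ' (-s)) ≤
        (2 * Real.exp (-μ) / (1 + Real.sqrt (1 - Real.exp (-2 * μ)))) * Real.exp (-s) := by
  set a := (γ 0).re with ha
  set y0 := (γ 0).im with hy0
  set a' := (γ' 0).re with ha'
  have hy0' : (γ' 0).im = y0 := (hequi 0).symm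
  have hy0pos : 0 < y0 := (γ 0).im_pos
  have him : ∀ t, (γ t).im = Real.exp (-t) * y0 := geod_im_exp γ hγ hstartγ
  have him' : ∀ t, (γ' t).im = Real.exp (-t) * y0 := by
    intro t; rw [geod_im_exp γ' hγ' hstartγ' t, hy0']
  have hre : ∀ t, (γ t).re = a := geod_re_const' γ hγ hstartγ
  have hre' : ∀ t, (γ' t).re = a' := geod_re_const' γ' hγ' hstartγ'
  -- bound on a and a'
  have hmeet_bound : ∀ (δ : ℝ → UpperHalfPlane) (b : ℝ),
      (∀ t, (δ t).re = b) → (∃ t, InHoroballAtZero μ (δ t)) →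
      b^2 ≤ Real.exp (-μ)^2 / 4 := by
    rintro δ b hb ⟨t, ht⟩
    rw [InHoroballAtZero, abs_sq_eq, hb] at ht
    have hv : 0 < (δ t).im := (δ t).im_pos
    nlinarith [sq_nonneg ((δ t).im - Real.exp (-μ)/2), ht]
  have ha2 : a^2 ≤ Real.exp (-μ)^2 / 4 := hmeet_bound γ a hre hmeet
  have ha'2 : a'^2 ≤ Real.exp (-μ)^2 / 4 := hmeet_bound γ' a' hre' hmeet'
  -- entry equation
  have hle : a^2 + y0^2 ≤ y0 := by
    have h := hentry.1
    rw [InHoroballAtZero, abs_sq_eq, hre, him] at h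
    simpa using h
  have hge : a^2 + y0^2 ≥ y0 := by
    set g : ℝ → ℝ := fun t => a^2 + (Real.exp (-t)*y0)^2 - Real.exp (-t)*y0 with hg
    have hcont : Continuous g := by fun_prop
    have hlim : Filter.Tendsto g (nhdsWithin 0 (Set.Iio 0)) (nhds (g 0)) :=
      (hcont.tendsto 0).mono_left nhdsWithin_le_nhds
    have hev : ∀ᶠ t in nhdsWithin 0 (Set.Iio (0:ℝ)), 0 ≤ g t := by
      filter_upwards [self_mem_nhdsWithin] with t ht
      have hnot := hentry.2 t ht
      rw [InHoroballAtZero, abs_sq_eq, hre, him] at hnot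
      push_neg at hnot
      simp only [hg]
      simp only [neg_zero, Real.exp_zero] at hnot ⊢
      nlinarith [hnot]
    have h0 : 0 ≤ g 0 := ge_of_tendsto hlim hev
    simp only [hg, neg_zero, Real.exp_zero, one_mul, one_pow] at h0
    nlinarith [h0]
  have heq : a^2 + y0^2 = y0 := le_antisymm hle hge
  -- y0 ≥ 1/2
  have hy0half : 1/2 ≤ y0 := by
    by_contra hlt
    push_neg at hlt
    set u : ℝ := 1/(2*y0) with hu
    have hupos : 0 < u := by positivity
    have hu1 : 1 < u := by
      rw [hu]
      rw [lt_div_iff₀ (by positivity)]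
      linarith
    have htneg : -Real.log u < 0 := by
      have := Real.log_pos hu1
      linarith
    have hnot := hentry.2 _ htneg
    rw [InHoroballAtZero, abs_sq_eq, hre, him] at hnot
    push_neg at hnot
    rw [neg_neg, Real.exp_log hupos] at hnot
    have huy : u * y0 = 1/2 := by
      rw [hu]; field_simp
    simp only [neg_zero, Real.exp_zero, one_mul] at hnot
    nlinarith [hnot, huy, sq_nonneg (2*y0 - 1)]
  -- main lower bound on y0
  have he2 : Real.exp (-μ)^2 = Real.exp (-2*μ) := by
    rw [sq, ← Real.exp_add]; ring_nf
  have hsq1 : 1 - Real.exp (-2*μ) ≤ (2*y0 - 1)^2 := by nlinarith [heq, ha2, he2]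
  have hy0ge : Real.sqrt (1 - Real.exp (-2*μ)) ≤ 2*y0 - 1 := by
    calc Real.sqrt (1 - Real.exp (-2*μ)) ≤ Real.sqrt ((2*y0-1)^2) := Real.sqrt_le_sqrt hsq1
      _ = 2*y0 - 1 := by rw [Real.sqrt_sq (by linarith)]
  have hsqrt_nonneg : 0 ≤ Real.sqrt (1 - Real.exp (-2*μ)) := Real.sqrt_nonneg _
  -- |a - a'| ≤ e^{-μ}
  have habs : |a - a'| ≤ Real.exp (-μ) := by
    have h1 : (a - a')^2 ≤ Real.exp (-μ)^2 := by nlinarith [ha2, ha'2, sq_nonneg (a + a')]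
    calc |a - a'| = Real.sqrt ((a-a')^2) := (Real.sqrt_sq_eq_abs _).symm
      _ ≤ Real.sqrt (Real.exp (-μ)^2) := Real.sqrt_le_sqrt h1
      _ = Real.exp (-μ) := Real.sqrt_sq (Real.exp_pos _).le
  -- final computation
  intro s hs
  have hzim : (γ (-s)).im = Real.exp s * y0 := by rw [him, neg_neg]
  have hz'im : (γ' (-s)).im = Real.exp s * y0 := by rw [him', neg_neg]
  have hY : 0 < Real.exp s * y0 := by positivity
  have hdistc : dist ((γ (-s)) : ℂ) ((γ' (-s)) : ℂ) = |a - a'| := by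
    rw [Complex.dist_of_im_eq]
    · rw [Real.dist_eq]
      congr 1
      rw [UpperHalfPlane.coe_re, UpperHalfPlane.coe_re, hre, hre']
    · rw [UpperHalfPlane.coe_im, UpperHalfPlane.coe_im, hzim, hz'im]
  have hsqrtim : Real.sqrt ((γ (-s)).im * (γ' (-s)).im) = Real.exp s * y0 := by
    rw [hzim, hz'im, ← sq, Real.sqrt_sq hY.le]
  rw [UpperHalfPlane.dist_eq, hdistc, hsqrtim]
  set x := |a - a'| / (2 * (Real.exp s * y0)) with hx
  have hxnonneg : 0 ≤ x := by positivity
  have harsinh : Real.arsinh x ≤ x := by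
    have h1 : x ≤ Real.sinh x := Real.self_le_sinh_iff.mpr hxnonneg
    calc Real.arsinh x ≤ Real.arsinh (Real.sinh x) := Real.arsinh_le_arsinh.mpr h1
      _ = x := Real.arsinh_sinh x
  have step1 : 2 * Real.arsinh x ≤ |a - a'| / (Real.exp s * y0) := by
    rw [hx]
    calc 2 * Real.arsinh (|a - a'| / (2 * (Real.exp s * y0)))
        ≤ 2 * (|a - a'| / (2 * (Real.exp s * y0))) := by linarith [harsinh]
      _ = |a - a'| / (Real.exp s * y0) := by field_simp
  refine step1.trans ?_
  have hden : (0:ℝ) < 1 + Real.sqrt (1 - Real.exp (-2*μ)) := by linarith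
  rw [div_le_iff₀ hY, div_mul_eq_mul_div, div_mul_eq_mul_div, le_div_iff₀ hden]
  have hss : Real.exp (-s) * Real.exp s = 1 := by rw [← Real.exp_add]; simp
  have key : |a - a'| * (1 + Real.sqrt (1 - Real.exp (-2*μ))) ≤ Real.exp (-μ) * (2*y0) :=
    mul_le_mul habs (by linarith [hy0ge]) (by positivity) (Real.exp_pos _).le
  have hrw : 2 * Real.exp (-μ) * Real.exp (-s) * (Real.exp s * y0) = Real.exp (-μ) * (2*y0) := by
    linear_combination (2 * Real.exp (-μ) * y0) * hss
  rw [hrw]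
  exact key
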